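/- Let μ be a finite nonatomic Borel measure on the Cantor dyadic group with finite s-energy I_s(μ) = ∫_G ∫_G φ_s(x - y) dμ(y) dμ(x) < ∞. Then the set E_1 = {x : limsup_{n→∞} μ(K_n(x)) 2^{ns} > 0} has μ-measure zero. -/

import Mathlib

open MeasureTheory Filter Topology
open scoped ENNReal Classical

/-- The Cantor dyadic group: sequences of 0s and 1s with coordinatewise addition mod 2. -/
abbrev G : Type := ℕ → ZMod 2

/-- The metric ρ(x,y) = ∑_{i=1}^∞ 2^{-i} |x_i - y_i| (coordinates indexed from 0 here). -/
noncomputable def rho (x y : G) : ℝ :=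
  ∑' i : ℕ, (2:ℝ) ^ (-(i:ℝ) - 1) * (if x i = y i then 0 else 1)

/-- The subgroup G_n of sequences vanishing in the first n coordinates. -/
def Gset (n : ℕ) : Set G := {x | ∀ i < n, x i = 0}

/-- The coset K_n(x) = x + G_n of G_n containing x. -/
def Kset (n : ℕ) (x : G) : Set G := {y | x - y ∈ Gset n}

/-- The k-th Walsh function. -/
def walsh (k : ℕ) (x : G) : ℝ :=
  ∏ i ∈ Finset.range k, if k.testBit i ∧ x i = 1 then (-1 : ℝ) else 1

/-- The s-kernel: φ_s(0) = 0 and φ_s(x) = 2^{s(n-1)} for x ∈ G_{n-1} \ G_n,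
i.e. 2^{s j} where j is the first nonzero coordinate of x. -/
noncomputable def kernel (s : ℝ) (x : G) : ℝ :=
  if h : ∃ i, x i ≠ 0 then (2:ℝ) ^ (s * (Nat.find h : ℝ)) else 0

/-- The truncated s-kernel φ_s^n. -/
noncomputable def kernelTrunc (s : ℝ) (n : ℕ) (x : G) : ℝ :=
  if x = 0 then 0 else if x ∈ Gset n then (2:ℝ) ^ (s * (n:ℝ)) else kernel s x

/-- Walsh–Fourier coefficient of the s-kernel w.r.t. a (Haar) measure lam. -/
noncomputable def phiHat (s : ℝ) (lam : Measure G) (k : ℕ) : ℝ :=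
  ∫ x, kernel s x * walsh k x ∂lam

/-- Walsh–Fourier coefficient of the truncated s-kernel. -/
noncomputable def phiHatTrunc (s : ℝ) (n : ℕ) (lam : Measure G) (k : ℕ) : ℝ :=
  ∫ x, kernelTrunc s n x * walsh k x ∂lam

/-- Walsh–Fourier coefficient of a measure μ. -/
noncomputable def muHat (μ : Measure G) (k : ℕ) : ℝ :=
  ∫ x, walsh k x ∂μ

/-- s-potential of μ at x. -/
noncomputable def potential (s : ℝ) (μ : Measure G) (x : G) : ℝ≥0∞ :=
  ∫⁻ y, ENNReal.ofReal (kernel s (x - y)) ∂μ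

/-- s-energy of μ. -/
noncomputable def energy (s : ℝ) (μ : Measure G) : ℝ≥0∞ :=
  ∫⁻ x, ∫⁻ y, ENNReal.ofReal (kernel s (x - y)) ∂μ ∂μ

/-- truncated s-energy of μ. -/
noncomputable def energyTrunc (s : ℝ) (n : ℕ) (μ : Measure G) : ℝ≥0∞ :=
  ∫⁻ x, ∫⁻ y, ENNReal.ofReal (kernelTrunc s n (x - y)) ∂μ ∂μ

/-- Diameter of a set in the metric ρ, valued in ℝ≥0∞. -/
noncomputable def diamRho (I : Set G) : ℝ≥0∞ :=
  ⨆ x ∈ I, ⨆ y ∈ I, ENNReal.ofReal (rho x y)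

/-- Pre-Hausdorff measure H^s_δ via countable covers of ρ-diameter < δ. -/
noncomputable def Hdelta (s : ℝ) (δ : ℝ≥0∞) (A : Set G) : ℝ≥0∞ :=
  ⨅ (I : ℕ → Set G) (_ : A ⊆ ⋃ i, I i) (_ : ∀ i, diamRho (I i) < δ),
    ∑' i, diamRho (I i) ^ s

/-- s-dimensional Hausdorff measure w.r.t. the metric ρ. -/
noncomputable def Hmeas (s : ℝ) (A : Set G) : ℝ≥0∞ :=
  ⨆ (δ : ℝ≥0∞) (_ : 0 < δ), Hdelta s δ A

/-- Hausdorff dimension w.r.t. the metric ρ. -/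
noncomputable def hdimRho (A : Set G) : ℝ≥0∞ :=
  ⨆ (t : ℝ) (_ : Hmeas t A = ⊤), ENNReal.ofReal t

/-!
On `K_n(x) \ {x}` the kernel `φ_s(x - ·)` is at least `2^{ns}`, so if `x` is not an atom of `μ`,
`μ(K_n(x)) 2^{ns} ≤ ν(K_n(x))` for the measure `ν = φ_s(x - ·) μ`. Where the potential of `μ` at `x`
is finite, `ν` is a finite measure and `ν(K_n(x))` decreases to `ν{x} = φ_s(0) μ{x} = 0`.
Finite energy makes the potential finite `μ`-almost everywhere.
-/

lemma measurableSet_Gset (n : ℕ) : MeasurableSet (Gset n) := by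
  simp only [Gset, Set.ofPred_forall]
  exact .iInter fun i => .iInter fun _ =>
    measurableSet_eq_fun (measurable_pi_apply i) measurable_const

lemma measurableSet_Kset (n : ℕ) (x : G) : MeasurableSet (Kset n x) :=
  (measurable_const.sub measurable_id) (measurableSet_Gset n)

lemma antitone_Kset (x : G) : Antitone fun n => Kset n x :=
  fun _ _ hmn _ hy i hi => hy i (hi.trans_le hmn)

lemma iInter_Kset (x : G) : ⋂ n, Kset n x = {x} := by
  ext y
  simp only [Set.mem_iInter, Set.mem_singleton_iff, Kset, Gset, Set.mem_ofPred_eq]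
  refine ⟨fun h => (sub_eq_zero.mp (funext fun i => h (i + 1) i i.lt_succ_self)).symm, ?_⟩
  rintro rfl n i _
  simp

lemma kernel_zero (s : ℝ) : kernel s 0 = 0 := by
  simp [kernel]

lemma measurable_kernel (s : ℝ) : Measurable (kernel s) := by
  -- the disjunct `x = 0` makes `Nat.find` total, with `kernel s 0 = 0` handled by the `if`
  have hex : ∀ x : G, ∃ i, x = 0 ∨ x i ≠ 0 := fun x => by
    by_cases hx : x = 0
    · exact ⟨0, .inl hx⟩
    · obtain ⟨i, hi⟩ := Function.ne_iff.mp hx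
      exact ⟨i, .inr hi⟩
  have : kernel s = fun x => if x = 0 then 0 else (2:ℝ) ^ (s * Nat.find (hex x)) := by
    funext x
    by_cases hx : x = 0
    · simp [hx, kernel_zero]
    · rw [if_neg hx, kernel, dif_pos (Function.ne_iff.mp hx : ∃ i, x i ≠ 0)]
      congr 3
      exact Nat.find_congr' (by simp [hx])
  rw [this]
  refine Measurable.find (f := fun (n : ℕ) (x : G) => if x = 0 then 0 else (2:ℝ) ^ (s * n))
    (fun n => ?_) (fun n => ?_) hex
  · exact Measurable.ite (measurableSet_singleton 0) measurable_const measurable_const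
  · exact (measurableSet_singleton 0).union
      (measurableSet_eq_fun (measurable_pi_apply n) measurable_const).compl

lemma rpow_le_kernel {s : ℝ} (hs : 0 ≤ s) {n : ℕ} {x : G} (hx0 : x ≠ 0) (hx : x ∈ Gset n) :
    (2:ℝ) ^ ((n:ℝ) * s) ≤ kernel s x := by
  have hex : ∃ i, x i ≠ 0 := Function.ne_iff.mp hx0
  have hn : n ≤ Nat.find hex := (Nat.le_find_iff hex n).mpr fun m hm => not_not.mpr (hx m hm)
  rw [kernel, dif_pos hex, mul_comm]
  exact Real.rpow_le_rpow_of_exponent_le one_le_two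
    (mul_le_mul_of_nonneg_left (by exact_mod_cast hn) hs)

lemma measurable_potential (s : ℝ) (μ : Measure G) [SFinite μ] : Measurable (potential s μ) :=
  Measurable.lintegral_prod_right'
    ((measurable_kernel s).ennreal_ofReal.comp (measurable_fst.sub measurable_snd))

lemma ae_potential_ne_top {s : ℝ} {μ : Measure G} [SFinite μ] (h : energy s μ ≠ ⊤) :
    ∀ᵐ x ∂μ, potential s μ x ≠ ⊤ :=
  (ae_lt_top (measurable_potential s μ) h).mono fun _ => LT.lt.ne

lemma tendsto_measure_Kset (ν : Measure G) [IsFiniteMeasure ν] (x : G) :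
    Tendsto (fun n => ν (Kset n x)) atTop (𝓝 (ν {x})) := by
  rw [← iInter_Kset x]
  exact tendsto_measure_iInter_atTop (fun n => (measurableSet_Kset n x).nullMeasurableSet)
    (antitone_Kset x) ⟨0, measure_ne_top ν _⟩

lemma measure_Kset_mul_rpow_le {s : ℝ} (hs : 0 ≤ s) {μ : Measure G} {x : G} (hx : μ {x} = 0)
    (n : ℕ) : μ (Kset n x) * ENNReal.ofReal ((2:ℝ) ^ ((n:ℝ) * s)) ≤
      ∫⁻ y in Kset n x, ENNReal.ofReal (kernel s (x - y)) ∂μ :=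
  calc μ (Kset n x) * ENNReal.ofReal ((2:ℝ) ^ ((n:ℝ) * s))
      = ∫⁻ _ in Kset n x \ {x}, ENNReal.ofReal ((2:ℝ) ^ ((n:ℝ) * s)) ∂μ := by
        rw [setLIntegral_const, measure_sdiff_null hx, mul_comm]
    _ ≤ ∫⁻ y in Kset n x \ {x}, ENNReal.ofReal (kernel s (x - y)) ∂μ :=
        setLIntegral_mono' ((measurableSet_Kset n x).diff (measurableSet_singleton x))
          fun y ⟨hyK, hyx⟩ => ENNReal.ofReal_le_ofReal
            (rpow_le_kernel hs (sub_ne_zero.mpr (Ne.symm hyx)) hyK)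
    _ ≤ ∫⁻ y in Kset n x, ENNReal.ofReal (kernel s (x - y)) ∂μ :=
        lintegral_mono_set Set.sdiff_subset

lemma tendsto_measure_Kset_mul_rpow {s : ℝ} (hs : 0 ≤ s) {μ : Measure G} {x : G}
    (hx : μ {x} = 0) (hpot : potential s μ x ≠ ⊤) :
    Tendsto (fun n : ℕ => μ (Kset n x) * ENNReal.ofReal ((2:ℝ) ^ ((n:ℝ) * s))) atTop (𝓝 0) := by
  set ν := μ.withDensity fun y => ENNReal.ofReal (kernel s (x - y))
  have : IsFiniteMeasure ν := isFiniteMeasure_withDensity hpot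
  have hνx : ν {x} = 0 := by
    rw [withDensity_apply _ (measurableSet_singleton x), lintegral_singleton, sub_self,
      kernel_zero, ENNReal.ofReal_zero, zero_mul]
  refine tendsto_of_tendsto_of_tendsto_of_le_of_le tendsto_const_nhds
    (hνx ▸ tendsto_measure_Kset ν x) (fun _ => zero_le) fun n => ?_
  rw [withDensity_apply _ (measurableSet_Kset n x)]
  exact measure_Kset_mul_rpow_le hs hx n

theorem stmt11_general (s : ℝ) (hs : 0 < s)
    (μ : Measure G) [IsFiniteMeasure μ] (hna : ∀ x : G, μ {x} = 0)
    (hfin : energy s μ ≠ ⊤) :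
    μ {x : G | 0 < limsup (fun n : ℕ =>
      μ (Kset n x) * ENNReal.ofReal ((2:ℝ) ^ ((n:ℝ) * s))) atTop} = 0 := by
  rw [measure_eq_zero_iff_ae_notMem]
  filter_upwards [ae_potential_ne_top hfin] with x hx
  rw [(tendsto_measure_Kset_mul_rpow hs.le (hna x) hx).limsup_eq]
  exact lt_irrefl 0

/-- If μ has finite s-energy, then the set where limsup μ(K_n(x)) 2^{ns} > 0 has μ-measure zero. -/
theorem stmt11 (s : ℝ) (hs : 0 < s) (hs1 : s < 1)
    (μ : Measure G) [IsFiniteMeasure μ] (hna : ∀ x : G, μ {x} = 0)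
    (hfin : energy s μ ≠ ⊤) :
    μ {x : G | 0 < limsup (fun n : ℕ =>
      μ (Kset n x) * ENNReal.ofReal ((2:ℝ) ^ ((n:ℝ) * s))) atTop} = 0 :=
  stmt11_general s hs μ hna hfin
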